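/- Let n and m be positive integers, s, t > 0, and let X and Y be independent real random variables with the Gamma(n, s) and Gamma(m, t) distributions, respectively. Then for every natural number k: E[Y^k · 1_{X ≤ Y}] = (Γ(m+k)/(t^k Γ(m))) · I_p(n, m+k), where p = s/(s+t). Consequently, the k-th moment of Y conditional on the event {X ≤ Y} equals (Γ(m+k)/(t^k Γ(m))) · I_p(n, m+k)/I_p(n, m). -/

import Mathlib

/-!
Conditionally on `Y = y`, the event `X ≤ Y` has probability `F_X(y)`, and the weight `y ^ k`
turns the `Gamma(m, t)` density into `Γ(m + k) / (t ^ k Γ(m))` times the `Gamma(m + k, t)`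
density. So everything reduces to `P(X ≤ Y) = I_p(n, m)`. Substituting `x = r y` in `F_X(y)` and
integrating out `y` (a Gamma integral) leaves
`s^n t^m Γ(n + m) / (Γ(n) Γ(m)) · ∫₀¹ r^(n-1) (t + s r)^(-(n+m)) dr`,
and `u = s r / (t + s r)` turns this into the incomplete beta integral.
-/

open MeasureTheory ProbabilityTheory

/-- The regularized incomplete beta function `I_p(n, m)` for positive integer
parameters `n, m`. -/
noncomputable def regIncBeta (n m : ℕ) (p : ℝ) : ℝ :=
  (Real.Gamma (n + m) / (Real.Gamma n * Real.Gamma m)) *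
    ∫ u in (0:ℝ)..p, u ^ (n - 1) * (1 - u) ^ (m - 1)

open Real Set

lemma integrableOn_pow_mul_exp_neg_mul_Ioi (j : ℕ) {l : ℝ} (hl : 0 < l) :
    IntegrableOn (fun y : ℝ => y ^ j * exp (-(l * y))) (Ioi 0) := by
  simpa [rpow_natCast, neg_mul] using integrableOn_rpow_mul_exp_neg_mul_rpow (p := 1)
    (s := j) (lt_of_lt_of_le neg_one_lt_zero j.cast_nonneg) zero_lt_one hl

lemma integral_pow_mul_exp_neg_mul_Ioi (j : ℕ) {l : ℝ} (hl : 0 < l) :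
    ∫ y in Ioi 0, y ^ j * exp (-(l * y)) = Gamma (j + 1) / l ^ (j + 1) := by
  have h := integral_rpow_mul_exp_neg_mul_Ioi (a := j + 1) (by positivity) hl
  rw [add_sub_cancel_right] at h
  simp only [rpow_natCast] at h
  rw [h, ← Nat.cast_add_one, rpow_natCast, one_div, inv_pow, inv_mul_eq_div]

lemma integral_pow_mul_exp_neg_mul_eq_pow_mul (j : ℕ) (s y : ℝ) :
    ∫ x in 0..y, x ^ j * exp (-(s * x)) =
      y ^ (j + 1) * ∫ r in 0..1, r ^ j * exp (-(s * r * y)) := by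
  have h := intervalIntegral.smul_integral_comp_mul_left (a := 0) (b := 1)
    (fun x => x ^ j * exp (-(s * x))) y
  rw [mul_zero, mul_one, smul_eq_mul] at h
  rw [← h, ← intervalIntegral.integral_const_mul, ← intervalIntegral.integral_const_mul]
  refine intervalIntegral.integral_congr fun r _ => ?_
  rw [show s * (y * r) = s * r * y by ring]
  ring

/-- The substitution `u = s r / (t + s r)`. -/
lemma integral_pow_mul_one_sub_pow_eq (j l : ℕ) {s t : ℝ} (hs : 0 < s) (ht : 0 < t) :
    ∫ u in 0..s / (s + t), u ^ j * (1 - u) ^ l =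
      s ^ (j + 1) * t ^ (l + 1) * ∫ r in 0..1, r ^ j / (t + s * r) ^ (j + l + 2) := by
  have hpos : ∀ r ∈ uIcc (0:ℝ) 1, 0 < t + s * r := fun r hr => by
    rw [uIcc_of_le zero_le_one] at hr
    nlinarith [hr.1]
  have hderiv : ∀ r ∈ uIcc (0:ℝ) 1,
      HasDerivAt (fun r => s * r / (t + s * r)) (s * t / (t + s * r) ^ 2) r := fun r hr => by
    refine (((hasDerivAt_id' r).const_mul s).div (((hasDerivAt_id' r).const_mul s).const_add t)
      (hpos r hr).ne').congr_deriv ?_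
    ring
  have hcont : ContinuousOn (fun r : ℝ => s * t / (t + s * r) ^ 2) (uIcc 0 1) :=
    continuousOn_const.div (by fun_prop) fun r hr => pow_ne_zero _ (hpos r hr).ne'
  have h := intervalIntegral.integral_comp_mul_deriv hderiv hcont
    (g := fun u => u ^ j * (1 - u) ^ l) (by fun_prop)
  simp only [mul_zero, zero_div, mul_one, add_comm t s, Function.comp_apply] at h
  rw [← h, ← intervalIntegral.integral_const_mul]
  refine intervalIntegral.integral_congr fun r hr => ?_
  have hr0 := (hpos r hr).ne'
  rw [show 1 - s * r / (t + s * r) = t / (t + s * r) by field_simp; ring,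
    div_pow, div_pow]
  field_simp
  ring

lemma integrable_pow_mul_exp_neg_prod (j l : ℕ) {s t : ℝ} (hs : 0 < s) (ht : 0 < t) :
    Integrable (fun p : ℝ × ℝ => p.2 ^ j * (p.1 ^ (j + l + 1) * exp (-((t + s * p.2) * p.1))))
      ((volume.restrict (Ioi 0)).prod (volume.restrict (Ioc 0 1))) := by
  have hdom : Integrable (fun p : ℝ × ℝ => p.1 ^ (j + l + 1) * exp (-(t * p.1)) * 1)
      ((volume.restrict (Ioi 0)).prod (volume.restrict (Ioc 0 1))) :=
    (integrableOn_pow_mul_exp_neg_mul_Ioi _ ht).mul_prod (integrableOn_const (by simp))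
  refine hdom.mono' (by fun_prop : Measurable _).aestronglyMeasurable ?_
  rw [Measure.prod_restrict, ae_restrict_iff' (measurableSet_Ioi.prod measurableSet_Ioc)]
  refine ae_of_all _ fun ⟨y, r⟩ ⟨(hy : 0 < y), (hr : r ∈ Ioc 0 1)⟩ => ?_
  have hexp : exp (-((t + s * r) * y)) ≤ exp (-(t * y)) :=
    exp_le_exp.mpr (by nlinarith [mul_pos (mul_pos hs hr.1) hy])
  dsimp only
  rw [Real.norm_of_nonneg (by have := hr.1.le; positivity), mul_one]
  refine (mul_le_of_le_one_left (by positivity) (pow_le_one₀ hr.1.le hr.2)).trans ?_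
  gcongr

lemma integral_Ioi_pow_mul_exp_mul_integral (j l : ℕ) {s t : ℝ} (hs : 0 < s) (ht : 0 < t) :
    ∫ y in Ioi 0, y ^ l * exp (-(t * y)) * ∫ x in 0..y, x ^ j * exp (-(s * x)) =
      Gamma (j + l + 2) / (s ^ (j + 1) * t ^ (l + 1)) *
        ∫ u in 0..s / (s + t), u ^ j * (1 - u) ^ l := by
  have scaled : ∀ y, y ^ l * exp (-(t * y)) * ∫ x in 0..y, x ^ j * exp (-(s * x)) =
      ∫ r in Ioc 0 1, r ^ j * (y ^ (j + l + 1) * exp (-((t + s * r) * y))) := fun y => by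
    rw [integral_pow_mul_exp_neg_mul_eq_pow_mul, ← intervalIntegral.integral_of_le zero_le_one,
      ← intervalIntegral.integral_const_mul, ← intervalIntegral.integral_const_mul]
    refine intervalIntegral.integral_congr fun r _ => ?_
    rw [show -((t + s * r) * y) = -(t * y) + -(s * r * y) by ring, exp_add]
    ring
  have gamma : ∀ r ∈ Ioc (0:ℝ) 1,
      ∫ y in Ioi 0, r ^ j * (y ^ (j + l + 1) * exp (-((t + s * r) * y))) =
        Gamma (j + l + 2) * (r ^ j / (t + s * r) ^ (j + l + 2)) := fun r hr => by
    rw [integral_const_mul, integral_pow_mul_exp_neg_mul_Ioi _ (by nlinarith [hr.1])]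
    push_cast
    ring_nf
  simp_rw [scaled]
  rw [integral_integral_swap (integrable_pow_mul_exp_neg_prod j l hs ht),
    setIntegral_congr_fun measurableSet_Ioc gamma, integral_const_mul,
    ← intervalIntegral.integral_of_le zero_le_one, integral_pow_mul_one_sub_pow_eq j l hs ht]
  field_simp

section GammaMeasure

variable {a r : ℝ}

lemma measurable_gammaPDF (a r : ℝ) : Measurable (gammaPDF a r) :=
  (measurable_gammaPDFReal a r).ennreal_ofReal

lemma gammaPDFReal_mul_pow (ha : 0 < a) (hr : 0 < r) (k : ℕ) (x : ℝ) :
    gammaPDFReal a r x * x ^ k = Gamma (a + k) / (r ^ k * Gamma a) * gammaPDFReal (a + k) r x := by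
  have hΓa := (Gamma_pos_of_pos ha).ne'
  have hΓak := (Gamma_pos_of_pos (by positivity : 0 < a + k)).ne'
  unfold gammaPDFReal
  split_ifs with hx
  · -- `x` may be `0`, where `x ^ (a - 1 + k) = x ^ (a - 1) * x ^ k` needs `a - 1 + k ≠ 0`
    rcases k.eq_zero_or_pos with rfl | hk
    · simp [hΓa]
    have hk' : (1:ℝ) ≤ k := by exact_mod_cast hk
    rw [show a + k - 1 = a - 1 + k by ring,
      rpow_add_natCast' hx (by linarith : 0 < a - 1 + k).ne', rpow_add_natCast hr.ne']
    field_simp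
  · simp

lemma integral_gammaMeasure (ha : 0 < a) (hr : 0 < r) (g : ℝ → ℝ) :
    ∫ y, g y ∂gammaMeasure a r = ∫ y, gammaPDFReal a r y * g y := by
  rw [gammaMeasure, integral_withDensity_eq_integral_toReal_smul (measurable_gammaPDF a r)
    (ae_of_all _ fun _ => ENNReal.ofReal_lt_top)]
  simp only [gammaPDF, ENNReal.toReal_ofReal (gammaPDFReal_nonneg ha hr _), smul_eq_mul]

lemma integral_gammaMeasure_eq_setIntegral_Ioi (ha : 0 < a) (hr : 0 < r) (g : ℝ → ℝ) :
    ∫ y, g y ∂gammaMeasure a r = ∫ y in Ioi 0, gammaPDFReal a r y * g y := by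
  rw [integral_gammaMeasure ha hr, ← integral_Ici_eq_integral_Ioi,
    setIntegral_eq_integral_of_forall_compl_eq_zero fun y hy => ?_]
  rw [mem_Ici] at hy
  simp [gammaPDFReal, hy]

lemma integral_mul_pow_gammaMeasure (ha : 0 < a) (hr : 0 < r) (k : ℕ) (g : ℝ → ℝ) :
    ∫ y, g y * y ^ k ∂gammaMeasure a r =
      Gamma (a + k) / (r ^ k * Gamma a) * ∫ y, g y ∂gammaMeasure (a + k) r := by
  rw [integral_gammaMeasure ha hr, integral_gammaMeasure (by positivity) hr,
    ← integral_const_mul]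
  congr with y
  linear_combination g y * gammaPDFReal_mul_pow ha hr k y

lemma integrable_gammaPDFReal (ha : 0 < a) (hr : 0 < r) : Integrable (gammaPDFReal a r) := by
  have h := integrable_toReal_of_lintegral_ne_top (measurable_gammaPDF a r).aemeasurable
    (by rw [lintegral_gammaPDF_eq_one ha hr]; exact ENNReal.one_ne_top)
  simpa [gammaPDF, ENNReal.toReal_ofReal (gammaPDFReal_nonneg ha hr _)] using h

lemma integrable_pow_gammaMeasure (ha : 0 < a) (hr : 0 < r) (k : ℕ) :
    Integrable (fun y => y ^ k) (gammaMeasure a r) := by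
  rw [gammaMeasure, integrable_withDensity_iff_integrable_smul' (measurable_gammaPDF a r)
    (ae_of_all _ fun _ => ENNReal.ofReal_lt_top)]
  simp only [gammaPDF, ENNReal.toReal_ofReal (gammaPDFReal_nonneg ha hr _), smul_eq_mul,
    gammaPDFReal_mul_pow ha hr k]
  exact (integrable_gammaPDFReal (by positivity) hr).const_mul _

lemma gammaMeasure_real_Iic (ha : 0 < a) (hr : 0 < r) {y : ℝ} (hy : 0 ≤ y) :
    (gammaMeasure a r).real (Iic y) = ∫ x in 0..y, gammaPDFReal a r x := by
  have := isProbabilityMeasure_gammaMeasure ha hr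
  rw [← cdf_eq_real, cdf_gammaMeasure_eq_integral ha hr, intervalIntegral.integral_of_le hy,
    ← integral_Icc_eq_integral_Ioc, setIntegral_eq_of_subset_of_forall_sdiff_eq_zero
      measurableSet_Iic Icc_subset_Iic_self fun x hx => ?_]
  have hx0 : ¬ 0 ≤ x := fun h => hx.2 ⟨h, hx.1⟩
  simp [gammaPDFReal, hx0]

lemma gammaPDFReal_natCast_add_one (j : ℕ) (r : ℝ) {x : ℝ} (hx : 0 ≤ x) :
    gammaPDFReal (j + 1) r x = r ^ (j + 1) / Gamma (j + 1) * (x ^ j * exp (-(r * x))) := by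
  rw [gammaPDFReal, if_pos hx, add_sub_cancel_right, ← Nat.cast_add_one, rpow_natCast,
    rpow_natCast, Nat.cast_add_one, mul_assoc]

end GammaMeasure

lemma setIntegral_prod_setOf_le_eq_integral (μ ν : Measure ℝ) [IsFiniteMeasure μ] [SFinite ν]
    {g : ℝ → ℝ} (hg : Integrable g ν) :
    ∫ z in {z : ℝ × ℝ | z.1 ≤ z.2}, g z.2 ∂μ.prod ν = ∫ y, μ.real (Iic y) * g y ∂ν := by
  have hS : MeasurableSet {z : ℝ × ℝ | z.1 ≤ z.2} := measurableSet_le measurable_fst measurable_snd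
  rw [← integral_indicator hS, integral_prod_symm _ ((hg.comp_snd μ).indicator hS)]
  congr with y
  rw [← smul_eq_mul, ← integral_indicator_const _ measurableSet_Iic]
  rfl

lemma measureReal_prod_setOf_le_eq_integral (μ ν : Measure ℝ) [IsFiniteMeasure μ]
    [IsFiniteMeasure ν] :
    (μ.prod ν).real {z : ℝ × ℝ | z.1 ≤ z.2} = ∫ y, μ.real (Iic y) ∂ν := by
  simpa using setIntegral_prod_setOf_le_eq_integral μ ν (integrable_const (1 : ℝ))

lemma gammaMeasure_prod_real_setOf_le (n M : ℕ) (hn : 0 < n) (hM : 0 < M) {s t : ℝ}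
    (hs : 0 < s) (ht : 0 < t) :
    ((gammaMeasure n s).prod (gammaMeasure M t)).real {z : ℝ × ℝ | z.1 ≤ z.2} =
      regIncBeta n M (s / (s + t)) := by
  obtain ⟨j, rfl⟩ : ∃ j, n = j + 1 := ⟨n - 1, by omega⟩
  obtain ⟨l, rfl⟩ : ∃ l, M = l + 1 := ⟨M - 1, by omega⟩
  push_cast
  have := isProbabilityMeasure_gammaMeasure (by positivity : (0:ℝ) < j + 1) hs
  have := isProbabilityMeasure_gammaMeasure (by positivity : (0:ℝ) < l + 1) ht
  have integrand : ∀ y ∈ Ioi (0:ℝ),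
      gammaPDFReal (l + 1) t y * (gammaMeasure (j + 1) s).real (Iic y) =
        t ^ (l + 1) / Gamma (l + 1) * (s ^ (j + 1) / Gamma (j + 1)) *
          (y ^ l * exp (-(t * y)) * ∫ x in 0..y, x ^ j * exp (-(s * x))) :=
      fun y (hy : 0 < y) => by
    rw [gammaPDFReal_natCast_add_one l t hy.le,
      gammaMeasure_real_Iic (by positivity) hs hy.le,
      intervalIntegral.integral_congr fun x hx => gammaPDFReal_natCast_add_one j s ?_,
      intervalIntegral.integral_const_mul]
    · ring
    · exact (uIcc_of_le hy.le ▸ hx).1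
  rw [measureReal_prod_setOf_le_eq_integral,
    integral_gammaMeasure_eq_setIntegral_Ioi (by positivity) ht,
    setIntegral_congr_fun measurableSet_Ioi integrand, integral_const_mul,
    integral_Ioi_pow_mul_exp_mul_integral j l hs ht, regIncBeta]
  simp only [Nat.add_sub_cancel]
  have := (Gamma_pos_of_pos (by positivity : (0:ℝ) < j + 1)).ne'
  have := (Gamma_pos_of_pos (by positivity : (0:ℝ) < l + 1)).ne'
  push_cast
  rw [show (j : ℝ) + 1 + (l + 1) = j + l + 2 by ring]
  field_simp

lemma setIntegral_gammaMeasure_prod_setOf_le_pow (n m k : ℕ) (hn : 0 < n) (hm : 0 < m) {s t : ℝ}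
    (hs : 0 < s) (ht : 0 < t) :
    ∫ z in {z : ℝ × ℝ | z.1 ≤ z.2}, z.2 ^ k ∂(gammaMeasure n s).prod (gammaMeasure m t) =
      Gamma (m + k) / (t ^ k * Gamma m) * regIncBeta n (m + k) (s / (s + t)) := by
  have hm' : (0:ℝ) < m := by exact_mod_cast hm
  have := isProbabilityMeasure_gammaMeasure (by exact_mod_cast hn : (0:ℝ) < n) hs
  have := isProbabilityMeasure_gammaMeasure hm' ht
  have := isProbabilityMeasure_gammaMeasure (by positivity : (0:ℝ) < m + k) ht
  rw [setIntegral_prod_setOf_le_eq_integral _ _ (integrable_pow_gammaMeasure hm' ht k),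
    integral_mul_pow_gammaMeasure hm' ht, ← measureReal_prod_setOf_le_eq_integral, ← Nat.cast_add,
    gammaMeasure_prod_real_setOf_le n (m + k) hn (by omega) hs ht]

lemma ProbabilityTheory.IndepFun.setIntegral_setOf_le_comp_eq {Ω : Type*}
    {mΩ : MeasurableSpace Ω} {P : Measure Ω} [IsFiniteMeasure P] {X Y : Ω → ℝ}
    (hXY : IndepFun X Y P)
    (hX : AEMeasurable X P) (hY : AEMeasurable Y P) {g : ℝ → ℝ} (hg : Measurable g) :
    ∫ ω in {ω | X ω ≤ Y ω}, g (Y ω) ∂P =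
      ∫ z in {z : ℝ × ℝ | z.1 ≤ z.2}, g z.2 ∂(P.map X).prod (P.map Y) := by
  rw [← (indepFun_iff_map_prod_eq_prod_map_map hX hY).mp hXY,
    setIntegral_map (f := fun z : ℝ × ℝ => g z.2) (measurableSet_le measurable_fst measurable_snd)
      (hg.comp measurable_snd).aestronglyMeasurable (hX.prodMk hY)]
  rfl

/-- If `X ~ Gamma(n, s)` and `Y ~ Gamma(m, t)` are independent, then for every `k : ℕ`,
`E[Y^k ⬝ 1_{X ≤ Y}] = (Γ(m+k)/(t^k Γ(m))) ⬝ I_p(n, m+k)` with `p = s/(s+t)`;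
consequently the `k`-th moment of `Y` conditional on `{X ≤ Y}` is
`(Γ(m+k)/(t^k Γ(m))) ⬝ I_p(n, m+k)/I_p(n, m)`. -/
theorem momentY_on_le_event_eq
    {Ω : Type*} {mΩ : MeasurableSpace Ω} (P : Measure Ω) [IsProbabilityMeasure P]
    (n m : ℕ) (hn : 0 < n) (hm : 0 < m) (s t : ℝ) (hs : 0 < s) (ht : 0 < t)
    (X Y : Ω → ℝ)
    (hX : Measure.map X P = gammaMeasure n s)
    (hY : Measure.map Y P = gammaMeasure m t)
    (hXY : IndepFun X Y P) (k : ℕ) :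
    (∫ ω in {ω | X ω ≤ Y ω}, Y ω ^ k ∂P =
        Real.Gamma (m + k) / (t ^ k * Real.Gamma m) *
          regIncBeta n (m + k) (s / (s + t))) ∧
      (∫ ω in {ω | X ω ≤ Y ω}, Y ω ^ k ∂P) / (P {ω | X ω ≤ Y ω}).toReal =
        Real.Gamma (m + k) / (t ^ k * Real.Gamma m) *
          (regIncBeta n (m + k) (s / (s + t)) / regIncBeta n m (s / (s + t))) := by
  have hXm : AEMeasurable X P := aemeasurable_of_map_neZero (by
    rw [hX]; have := isProbabilityMeasure_gammaMeasure (by exact_mod_cast hn : (0:ℝ) < n) hs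
    infer_instance)
  have hYm : AEMeasurable Y P := aemeasurable_of_map_neZero (by
    rw [hY]; have := isProbabilityMeasure_gammaMeasure (by exact_mod_cast hm : (0:ℝ) < m) ht
    infer_instance)
  have moment : ∀ j : ℕ, ∫ ω in {ω | X ω ≤ Y ω}, Y ω ^ j ∂P =
      Gamma (m + j) / (t ^ j * Gamma m) * regIncBeta n (m + j) (s / (s + t)) := fun j => by
    rw [hXY.setIntegral_setOf_le_comp_eq hXm hYm (g := (· ^ j)) (measurable_id.pow_const j),
      hX, hY, setIntegral_gammaMeasure_prod_setOf_le_pow n m j hn hm hs ht]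
  have prob : (P {ω | X ω ≤ Y ω}).toReal = regIncBeta n m (s / (s + t)) := by
    simpa [(Gamma_pos_of_pos (by exact_mod_cast hm : (0:ℝ) < m)).ne', measureReal_def]
      using moment 0
  rw [moment k, prob, mul_div_assoc]
  exact ⟨rfl, rfl⟩
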